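/- A function f:B₈(0,r)→𝕆 on the open ball of radius r centered at 0 is slice monogenic if and only if it admits a power series expansion f(x) = Σ_{n=0}^{∞} xⁿ·(1/n!)·(∂ⁿf/∂xⁿ)(0), i.e. a series of the form Σ_{n≥0} xⁿaₙ with octonionic coefficients aₙ written on the right, converging on B₈(0,r). -/

import Mathlib

noncomputable section

open MeasureTheory

/-- The octonions `𝕆`, modelled as ℝ⁸ with the Euclidean norm. -/
abbrev Oct : Type := EuclideanSpace ℝ (Fin 8)

namespace Oct

/-- Index table of the octonionic multiplication: `e i * e j = ± e (idxT i j)`. -/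
def idxT : Fin 8 → Fin 8 → Fin 8 :=
  ![![0,1,2,3,4,5,6,7],
    ![1,0,4,5,2,3,7,6],
    ![2,4,0,6,1,7,3,5],
    ![3,5,6,0,7,1,2,4],
    ![4,2,1,7,0,6,5,3],
    ![5,3,7,1,6,0,4,2],
    ![6,7,3,2,5,4,0,1],
    ![7,6,5,4,3,2,1,0]]

/-- Sign table of the octonionic multiplication: `e i * e j = signT i j • e (idxT i j)`. -/
def signT : Fin 8 → Fin 8 → ℝ :=
  ![![1,1,1,1,1,1,1,1],
    ![1,-1,1,1,-1,-1,-1,1],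
    ![1,-1,-1,1,1,1,-1,-1],
    ![1,-1,-1,-1,-1,1,1,1],
    ![1,1,-1,1,-1,-1,1,-1],
    ![1,1,-1,-1,1,-1,-1,1],
    ![1,1,1,-1,-1,1,-1,-1],
    ![1,-1,1,-1,1,-1,1,-1]]

/-- Octonionic multiplication. -/
def omul (x y : Oct) : Oct :=
  (WithLp.equiv 2 (Fin 8 → ℝ)).symm fun k =>
    ∑ i : Fin 8, ∑ j : Fin 8,
      if idxT i j = k then signT i j * x i * y j else 0

/-- Octonionic conjugation `x̄`. -/
def oconj (x : Oct) : Oct :=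
  (WithLp.equiv 2 (Fin 8 → ℝ)).symm fun k => if k = 0 then x k else -x k

/-- Real part of an octonion. -/
def oRe (x : Oct) : ℝ := x 0

/-- The basis octonions `e i`. -/
def unit (i : Fin 8) : Oct := EuclideanSpace.single i 1

/-- The octonion `1`. -/
def oone : Oct := unit 0

/-- Powers of an octonion (powers are unambiguous by power-associativity). -/
def opow (x : Oct) : ℕ → Oct
  | 0 => oone
  | n + 1 => omul (opow x n) x

/-- Inverse of a nonzero octonion. -/
def oinv (x : Oct) : Oct := (‖x‖ ^ 2)⁻¹ • oconj x

/-- A function is left octonionic monogenic on `U` if `𝒟 f = 0` there, where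
`𝒟 = ∂/∂x₀ + Σᵢ eᵢ ∂/∂xᵢ` is the octonionic Cauchy–Riemann operator. -/
def LeftMonogenicOn (f : Oct → Oct) (U : Set Oct) : Prop :=
  ∀ x ∈ U, DifferentiableAt ℝ f x ∧
    ∑ i : Fin 8, omul (unit i) (fderiv ℝ f x (unit i)) = 0

/-- The sphere `𝕊` of imaginary units of `𝕆`. -/
def sphS : Set Oct := {x | oRe x = 0 ∧ ‖x‖ = 1}

/-- The complex slice `ℂ_I = ℝ + ℝ I`. -/
def sliceC (I : Oct) : Set Oct := {x | ∃ u v : ℝ, x = u • oone + v • I}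

/-- A function is (left) slice monogenic on `Ω` if its restriction to every slice `ℂ_I`
is holomorphic, i.e. `(∂/∂u + I ∂/∂v) f(u + Iv) = 0`. -/
def SliceMonogenicOn (f : Oct → Oct) (Ω : Set Oct) : Prop :=
  ∀ I ∈ sphS, ∀ u v : ℝ, u • oone + v • I ∈ Ω →
    DifferentiableAt ℝ (fun p : ℝ × ℝ => f (p.1 • oone + p.2 • I)) (u, v) ∧
    fderiv ℝ (fun p : ℝ × ℝ => f (p.1 • oone + p.2 • I)) (u, v) (1, 0)
      + omul I (fderiv ℝ (fun p : ℝ × ℝ => f (p.1 • oone + p.2 • I)) (u, v) (0, 1)) = 0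

end Oct

/-!
Fix an imaginary unit `I`. Left multiplication by `I` squares to `-1` and is skew-adjoint, so it
turns `𝕆` into a complex Banach space in which the slice `ℂ_I` is the line `ℂ • 1`, with
`(z • 1)ⁿ = zⁿ • 1` and `(z • 1) a = z • a`. For this structure the slice-monogenic condition on
`ℂ_I` is the Cauchy–Riemann equation for `z ↦ f (z • 1)`, and a function of `z` is holomorphic on a
disc iff it is a sum `Σ zⁿ • aₙ`, i.e. `Σ xⁿ aₙ` on the slice. The Taylor coefficients at `0` are
the derivatives of `t ↦ f t` along the real axis, which all slices share, so a single series
represents `f` on the whole ball.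
-/

open Metric
open scoped Nat

section PowerSeries

variable {𝕜 E : Type*} [RCLike 𝕜] [NormedAddCommGroup E] [NormedSpace 𝕜 E] [CompleteSpace E]

theorem analyticOnNhd_of_hasSum_pow_smul {g : 𝕜 → E} {a : ℕ → E} {r : ℝ}
    (hg : ∀ z ∈ ball (0 : 𝕜) r, HasSum (fun n => z ^ n • a n) (g z)) :
    AnalyticOnNhd 𝕜 g (ball 0 r) := by
  let p : FormalMultilinearSeries 𝕜 𝕜 E :=
    fun n => ContinuousMultilinearMap.mkPiRing 𝕜 (Fin n) (a n)
  have hp : ∀ z n, p n (fun _ => z) = z ^ n • a n := by simp [p]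
  have hrad : ENNReal.ofReal r ≤ p.radius := by
    refine ENNReal.le_of_forall_nnreal_lt fun s hs => p.le_radius_of_tendsto (l := 0) ?_
    have hs : ((s : ℝ) : 𝕜) ∈ ball 0 r := by
      rw [mem_ball_zero_iff, RCLike.norm_ofReal, abs_of_nonneg s.coe_nonneg]
      exact (ENNReal.ofReal_lt_ofReal_iff_of_nonneg s.coe_nonneg).1 (by simpa using hs)
    simpa [p, hp, norm_smul, mul_comm] using (hg _ hs).summable.tendsto_atTop_zero.norm
  have hball : ball (0 : 𝕜) r ⊆ eball 0 p.radius := fun z hz => by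
    rw [mem_eball, edist_zero_right, ← ofReal_norm]
    exact ((ENNReal.ofReal_lt_ofReal_iff_of_nonneg (norm_nonneg z)).2
      (mem_ball_zero_iff.1 hz)).trans_le hrad
  intro z hz
  have hps := p.hasFPowerSeriesOnBall (pos_of_mem_eball (hball hz))
  have hsum : Set.EqOn g p.sum (ball 0 r) := fun w hw =>
    (hg w hw).unique (by simpa [hp] using hps.hasSum (hball hw))
  exact (hps.analyticAt_of_mem (hball hz)).congr
    (Filter.eventuallyEq_of_mem (isOpen_ball.mem_nhds hz) hsum).symm

end PowerSeries

namespace Complex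

theorem add_I_smul_eq_zero_iff {M : Type*} [AddCommGroup M] [Module ℂ M] {v w : M} :
    v + I • w = 0 ↔ w = I • v := by
  constructor <;> intro h
  · have h' : I • v - w = 0 := by
      simpa [smul_add, smul_smul, sub_eq_add_neg] using congrArg (I • ·) h
    exact (sub_eq_zero.1 h').symm
  · rw [h, smul_smul, I_mul_I, neg_one_smul, add_neg_cancel]

variable {E : Type*} [NormedAddCommGroup E] [NormedSpace ℝ E] [NormedSpace ℂ E]
  [IsScalarTower ℝ ℂ E]

theorem differentiableAt_iff_cauchyRiemann {g : ℂ → E} {p : ℝ × ℝ} :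
    DifferentiableAt ℂ g (equivRealProdCLM.symm p) ↔
      DifferentiableAt ℝ (g ∘ equivRealProdCLM.symm) p ∧
        fderiv ℝ (g ∘ equivRealProdCLM.symm) p (1, 0) +
          I • fderiv ℝ (g ∘ equivRealProdCLM.symm) p (0, 1) = 0 := by
  rw [equivRealProdCLM.symm.comp_right_differentiableAt_iff,
    equivRealProdCLM.symm.comp_right_fderiv]
  set z := equivRealProdCLM.symm p
  simp only [ContinuousLinearMap.comp_apply, ContinuousLinearEquiv.coe_coe,
    equivRealProdCLM_symm_apply, ofReal_one, ofReal_zero, zero_mul, add_zero, one_mul, zero_add,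
    add_I_smul_eq_zero_iff]
  constructor
  · intro h
    refine ⟨h.restrictScalars ℝ, ?_⟩
    rw [h.fderiv_restrictScalars ℝ]
    simp
  · rintro ⟨h, hI⟩
    refine (hasFDerivAt_of_restrictScalars ℝ h.hasFDerivAt
      (f' := ContinuousLinearMap.toSpanSingleton ℂ (fderiv ℝ g z 1)) ?_).differentiableAt
    ext ζ
    have hζ : ζ = ζ.re • (1 : ℂ) + ζ.im • I := by simp
    rw [hζ]
    simp only [ContinuousLinearMap.coe_restrictScalars', ContinuousLinearMap.toSpanSingleton_apply,
      map_add, map_smul, hI, one_smul]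

theorem _root_.HasDerivAt.comp_ofReal_of_isScalarTower {g : ℂ → E} {e : E} {t : ℝ}
    (hg : HasDerivAt g e t) : HasDerivAt (fun s : ℝ => g s) e t := by
  simpa [Function.comp_def] using
    ((hg.hasFDerivAt.restrictScalars ℝ).comp t ofRealCLM.hasFDerivAt).hasDerivAt

variable [CompleteSpace E]

theorem iteratedDeriv_comp_ofReal {g : ℂ → E} {U : Set ℂ} (hU : IsOpen U)
    (hg : DifferentiableOn ℂ g U) (n : ℕ) {t : ℝ} (ht : (t : ℂ) ∈ U) :
    iteratedDeriv n (fun s : ℝ => g s) t = iteratedDeriv n g t := by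
  induction n generalizing g with
  | zero => simp
  | succ n ih =>
    have hderiv : deriv (fun s : ℝ => g s) =ᶠ[nhds t] fun s : ℝ => deriv g s := by
      filter_upwards [(hU.preimage continuous_ofReal).mem_nhds ht] with s hs
      exact ((hg.differentiableAt (hU.mem_nhds hs)).hasDerivAt.comp_ofReal_of_isScalarTower).deriv
    rw [iteratedDeriv_succ', iteratedDeriv_succ', hderiv.iteratedDeriv_eq, ih (hg.deriv hU)]

theorem hasSum_taylorSeries_comp_ofReal {g : ℂ → E} {r : ℝ}
    (hg : DifferentiableOn ℂ g (ball 0 r)) {z : ℂ} (hz : z ∈ ball 0 r) :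
    HasSum (fun n => z ^ n • ((n ! : ℝ)⁻¹ • iteratedDeriv n (fun t : ℝ => g t) 0)) (g z) := by
  have h0 : ((0 : ℝ) : ℂ) ∈ ball (0 : ℂ) r := by simpa using pos_of_mem_ball hz
  convert hasSum_taylorSeries_on_ball hg hz using 2 with n
  rw [iteratedDeriv_comp_ofReal isOpen_ball hg n h0, ofReal_zero, sub_zero, smul_comm,
    ← algebraMap_smul ℂ, map_inv₀, map_natCast]

end Complex

section ComplexStructure

open scoped InnerProductSpace

variable {E : Type*} [NormedAddCommGroup E] [InnerProductSpace ℝ E] {J : Module.End ℝ E}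

theorem norm_re_smul_add_im_smul (hJ : J * J = -1) (hskew : ∀ v w, ⟪J v, w⟫_ℝ = -⟪v, J w⟫_ℝ)
    (z : ℂ) (w : E) : ‖z.re • w + z.im • J w‖ = ‖z‖ * ‖w‖ := by
  have horth : ⟪w, J w⟫_ℝ = 0 := by
    have := hskew w w
    rw [real_inner_comm] at this
    linarith
  have horth' : ⟪J w, w⟫_ℝ = 0 := by rwa [real_inner_comm]
  have hJJ : ⟪J w, J w⟫_ℝ = ⟪w, w⟫_ℝ := by
    rw [hskew, ← Module.End.mul_apply, hJ]
    simp
  rw [← sq_eq_sq₀ (norm_nonneg _) (by positivity), mul_pow, Complex.sq_norm, Complex.normSq_apply,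
    ← real_inner_self_eq_norm_sq, ← real_inner_self_eq_norm_sq]
  simp only [inner_add_left, inner_add_right, real_inner_smul_left, real_inner_smul_right, horth,
    horth', hJJ]
  ring

abbrev complexNormedSpace (J : Module.End ℝ E) (hJ : J * J = -1)
    (hskew : ∀ v w, ⟪J v, w⟫_ℝ = -⟪v, J w⟫_ℝ) : NormedSpace ℂ E where
  toModule := Module.compHom E (Complex.lift ⟨J, hJ⟩).toRingHom
  norm_smul_le z w := (norm_re_smul_add_im_smul hJ hskew z w).le

variable (hJ : J * J = -1) (hskew : ∀ v w, ⟪J v, w⟫_ℝ = -⟪v, J w⟫_ℝ)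

theorem complexNormedSpace_smul (z : ℂ) (w : E) :
    letI := complexNormedSpace J hJ hskew
    z • w = z.re • w + z.im • J w :=
  rfl

theorem complexNormedSpace_isScalarTower :
    letI := complexNormedSpace J hJ hskew
    IsScalarTower ℝ ℂ E :=
  letI := complexNormedSpace J hJ hskew
  ⟨fun r z w => by simp only [complexNormedSpace_smul hJ hskew, Complex.smul_re, Complex.smul_im,
    smul_eq_mul, mul_smul, smul_add]⟩

end ComplexStructure

namespace Oct

open scoped InnerProductSpace

theorem omul_apply (x y : Oct) : omul x y = WithLp.toLp 2 ![
    x 0 * y 0 - x 1 * y 1 - x 2 * y 2 - x 3 * y 3 - x 4 * y 4 - x 5 * y 5 - x 6 * y 6 - x 7 * y 7,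
    x 0 * y 1 + x 1 * y 0 + x 2 * y 4 + x 3 * y 5 - x 4 * y 2 - x 5 * y 3 - x 6 * y 7 + x 7 * y 6,
    x 0 * y 2 - x 1 * y 4 + x 2 * y 0 + x 3 * y 6 + x 4 * y 1 + x 5 * y 7 - x 6 * y 3 - x 7 * y 5,
    x 0 * y 3 - x 1 * y 5 - x 2 * y 6 + x 3 * y 0 - x 4 * y 7 + x 5 * y 1 + x 6 * y 2 + x 7 * y 4,
    x 0 * y 4 + x 1 * y 2 - x 2 * y 1 + x 3 * y 7 + x 4 * y 0 - x 5 * y 6 + x 6 * y 5 - x 7 * y 3,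
    x 0 * y 5 + x 1 * y 3 - x 2 * y 7 - x 3 * y 1 + x 4 * y 6 + x 5 * y 0 - x 6 * y 4 + x 7 * y 2,
    x 0 * y 6 + x 1 * y 7 + x 2 * y 3 - x 3 * y 2 - x 4 * y 5 + x 5 * y 4 + x 6 * y 0 - x 7 * y 1,
    x 0 * y 7 - x 1 * y 6 + x 2 * y 5 - x 3 * y 4 + x 4 * y 3 - x 5 * y 2 + x 6 * y 1 + x 7 * y 0]
    := by
  ext k
  fin_cases k <;> simp [omul, idxT, signT, Fin.sum_univ_eight] <;> ring

theorem oone_apply (k : Fin 8) : oone k = if k = 0 then 1 else 0 := by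
  simp [oone, unit]

theorem norm_oone : ‖oone‖ = 1 := by
  simp [oone, unit]

theorem oone_omul (x : Oct) : omul oone x = x := by
  ext k; fin_cases k <;> simp [omul_apply, oone_apply]

theorem omul_oone (x : Oct) : omul x oone = x := by
  ext k; fin_cases k <;> simp [omul_apply, oone_apply]

theorem omul_add_left (x x' y : Oct) : omul (x + x') y = omul x y + omul x' y := by
  ext k; fin_cases k <;> simp [omul_apply] <;> ring

theorem omul_add_right (x y y' : Oct) : omul x (y + y') = omul x y + omul x y' := by
  ext k; fin_cases k <;> simp [omul_apply] <;> ring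

theorem omul_smul_left (c : ℝ) (x y : Oct) : omul (c • x) y = c • omul x y := by
  ext k; fin_cases k <;> simp [omul_apply] <;> ring

theorem omul_smul_right (c : ℝ) (x y : Oct) : omul x (c • y) = c • omul x y := by
  ext k; fin_cases k <;> simp [omul_apply] <;> ring

theorem omul_omul_self_of_mem_sphS {I : Oct} (hI : I ∈ sphS) (w : Oct) :
    omul I (omul I w) = -w := by
  obtain ⟨hre, hnorm⟩ := hI
  have h0 : I 0 = 0 := hre
  have h1 : ⟪I, I⟫_ℝ = 1 := by rw [real_inner_self_eq_norm_sq, hnorm, one_pow]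
  simp only [PiLp.inner_apply, Fin.sum_univ_eight, h0, RCLike.inner_apply, conj_trivial] at h1
  ext k; fin_cases k <;> simp [omul_apply, h0] <;> linear_combination (-w _) * h1

theorem inner_omul_left_of_oRe_eq_zero {I : Oct} (hI : oRe I = 0) (v w : Oct) :
    ⟪omul I v, w⟫_ℝ = -⟪v, omul I w⟫_ℝ := by
  have h0 : I 0 = 0 := hI
  simp [PiLp.inner_apply, Fin.sum_univ_eight, omul_apply, h0]
  ring

def lmul (x : Oct) : Module.End ℝ Oct where
  toFun := omul x
  map_add' := omul_add_right x
  map_smul' c := omul_smul_right c x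

abbrev sliceNormedSpace {I : Oct} (hI : I ∈ sphS) : NormedSpace ℂ Oct :=
  complexNormedSpace (lmul I) (LinearMap.ext (omul_omul_self_of_mem_sphS hI))
    (inner_omul_left_of_oRe_eq_zero hI.1)

section Slice

variable {I : Oct} (hI : I ∈ sphS)

theorem slice_smul (z : ℂ) (w : Oct) :
    letI := sliceNormedSpace hI
    z • w = z.re • w + z.im • omul I w :=
  rfl

theorem slice_I_smul (w : Oct) :
    letI := sliceNormedSpace hI
    Complex.I • w = omul I w := by
  simp [slice_smul hI]

theorem slice_isScalarTower :
    letI := sliceNormedSpace hI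
    IsScalarTower ℝ ℂ Oct :=
  complexNormedSpace_isScalarTower _ _

theorem slice_ofReal_smul (t : ℝ) (w : Oct) :
    letI := sliceNormedSpace hI
    (t : ℂ) • w = t • w := by
  simp [slice_smul hI]

theorem slice_smul_oone (z : ℂ) :
    letI := sliceNormedSpace hI
    z • oone = z.re • oone + z.im • I := by
  rw [slice_smul hI, omul_oone]

theorem slice_norm_smul_oone (z : ℂ) :
    letI := sliceNormedSpace hI
    ‖z • oone‖ = ‖z‖ := by
  let _ := sliceNormedSpace hI
  rw [norm_smul, norm_oone, mul_one]

theorem slice_omul_smul_oone (z : ℂ) (w : Oct) :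
    letI := sliceNormedSpace hI
    omul (z • oone) w = z • w := by
  rw [slice_smul_oone hI, omul_add_left, omul_smul_left, omul_smul_left, oone_omul, slice_smul hI]

theorem slice_opow_smul_oone (z : ℂ) (n : ℕ) :
    letI := sliceNormedSpace hI
    opow (z • oone) n = z ^ n • oone := by
  let _ := sliceNormedSpace hI
  induction n with
  | zero => simp [opow]
  | succ n ih => rw [opow, ih, slice_omul_smul_oone hI, smul_smul, ← pow_succ]

theorem slice_smul_oone_mem_ball_iff (z : ℂ) (r : ℝ) :
    letI := sliceNormedSpace hI
    z • oone ∈ ball 0 r ↔ z ∈ ball 0 r := by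
  simp only [mem_ball_zero_iff, slice_norm_smul_oone hI]

theorem mem_sliceC_iff (x : Oct) :
    letI := sliceNormedSpace hI
    x ∈ sliceC I ↔ ∃ z : ℂ, z • oone = x := by
  simp only [sliceC, Set.mem_ofPred_eq, slice_smul_oone hI]
  exact ⟨fun ⟨u, v, h⟩ => ⟨⟨u, v⟩, h.symm⟩, fun ⟨z, h⟩ => ⟨z.re, z.im, h.symm⟩⟩

end Slice

theorem exists_mem_sphS_mem_sliceC (x : Oct) : ∃ I ∈ sphS, x ∈ sliceC I := by
  set y := x - oRe x • oone with hy
  have hy0 : y 0 = 0 := by simp [y, oRe, oone_apply]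
  rcases eq_or_ne y 0 with h | h
  · refine ⟨unit 1, ⟨by simp [oRe, unit], by simp [unit]⟩, oRe x, 0, ?_⟩
    rwa [zero_smul, add_zero, ← sub_eq_zero]
  · refine ⟨‖y‖⁻¹ • y, ⟨by simp [oRe, hy0], norm_smul_inv_norm h⟩, oRe x, ‖y‖, ?_⟩
    rw [smul_smul, mul_inv_cancel₀ (norm_ne_zero_iff.2 h), one_smul, hy]
    abel

theorem sliceMonogenicOn_iff {f : Oct → Oct} {Ω : Set Oct} :
    SliceMonogenicOn f Ω ↔ ∀ I (hI : I ∈ sphS),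
      letI := sliceNormedSpace hI
      ∀ z : ℂ, z • oone ∈ Ω → DifferentiableAt ℂ (fun z : ℂ => f (z • oone)) z := by
  refine forall₂_congr fun I hI => ?_
  let _ := sliceNormedSpace hI
  have _ := slice_isScalarTower hI
  have hcomp : (fun p : ℝ × ℝ => f (p.1 • oone + p.2 • I)) =
      (fun z : ℂ => f (z • oone)) ∘ Complex.equivRealProdCLM.symm := by
    ext p
    simp [slice_smul_oone hI]
  simp only [hcomp, ← slice_I_smul hI]
  constructor
  · intro h z hz
    have hz' : Complex.equivRealProdCLM.symm (z.re, z.im) = z :=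
      Complex.equivRealProdCLM.symm_apply_apply z
    exact hz' ▸ Complex.differentiableAt_iff_cauchyRiemann.2
      (h z.re z.im (by simpa [slice_smul_oone hI] using hz))
  · intro h u v huv
    exact Complex.differentiableAt_iff_cauchyRiemann.1
      (h _ (by simpa [slice_smul_oone hI] using huv))

end Oct

open Oct

theorem slice_monogenic_iff_power_series_general
    (r : ℝ) (f : Oct → Oct) :
    Oct.SliceMonogenicOn f (Metric.ball (0 : Oct) r) ↔
      ∃ a : ℕ → Oct, ∀ x ∈ Metric.ball (0 : Oct) r,
        HasSum (fun n : ℕ => Oct.omul (Oct.opow x n) (a n)) (f x) := by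
  constructor
  · intro hf
    refine ⟨fun n => (n ! : ℝ)⁻¹ • iteratedDeriv n (fun t : ℝ => f (t • oone)) 0, fun x hx => ?_⟩
    obtain ⟨I, hI, hxI⟩ := exists_mem_sphS_mem_sliceC x
    let _ := sliceNormedSpace hI
    have _ := slice_isScalarTower hI
    obtain ⟨z, rfl⟩ := (mem_sliceC_iff hI x).1 hxI
    have hg : DifferentiableOn ℂ (fun z : ℂ => f (z • oone)) (ball 0 r) := fun w hw =>
      (sliceMonogenicOn_iff.1 hf I hI w
        ((slice_smul_oone_mem_ball_iff hI w r).2 hw)).differentiableWithinAt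
    simpa [slice_opow_smul_oone hI, slice_omul_smul_oone hI, slice_ofReal_smul hI] using
      Complex.hasSum_taylorSeries_comp_ofReal hg ((slice_smul_oone_mem_ball_iff hI z r).1 hx)
  · rintro ⟨a, ha⟩
    refine sliceMonogenicOn_iff.2 fun I hI => ?_
    let _ := sliceNormedSpace hI
    have hg : AnalyticOnNhd ℂ (fun z : ℂ => f (z • oone)) (ball 0 r) :=
      analyticOnNhd_of_hasSum_pow_smul fun z hz => by
        simpa [slice_opow_smul_oone hI, slice_omul_smul_oone hI] using
          ha (z • oone) ((slice_smul_oone_mem_ball_iff hI z r).2 hz)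
    exact fun z hz => (hg z ((slice_smul_oone_mem_ball_iff hI z r).1 hz)).differentiableAt

/-- A function `f : B₈(0,r) → 𝕆` is slice monogenic if and only if it
admits a power series expansion `f(x) = Σₙ xⁿ aₙ` with octonionic coefficients on the
right, converging on `B₈(0,r)`. -/
theorem slice_monogenic_iff_power_series
    (r : ℝ) (hr : 0 < r) (f : Oct → Oct) :
    Oct.SliceMonogenicOn f (Metric.ball (0 : Oct) r) ↔
      ∃ a : ℕ → Oct, ∀ x ∈ Metric.ball (0 : Oct) r,
        HasSum (fun n : ℕ => Oct.omul (Oct.opow x n) (a n)) (f x) :=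
  slice_monogenic_iff_power_series_general r f
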